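/- (Guitart adjunction, hom-isomorphism form.) Let B be a category, Φ : B ⥤ Cat a functor, and 𝒳 a category. Let 𝒜 denote the category whose objects are functors Σ : B ⥤ Diag°(𝒳) with Σ ⋙ D^𝒳 = Φ and whose morphisms Σ → Σ' are natural transformations σ whose image under D^𝒳 is the identity of Φ. Then the functor category of functors Grothendieck Φ ⥤ 𝒳 is isomorphic to 𝒜, via mutually inverse functors: T : Grothendieck Φ ⥤ 𝒳 is sent to T̂ with T̂(a) = (Φ a, ι_a ⋙ T) on objects and T̂(u : a → b) = (Φ u, φ^u) where φ^u_x = T.map (u, 𝟙_{(Φ u).obj x}); conversely Σ is sent to the functor Σ̌ with Σ̌(a, x) = (Σ a applied to x) and Σ̌(u, f) the composite of the component at x of the natural-transformation part of Σ u followed by (Σ b).map f. -/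

import Mathlib

open CategoryTheory

universe v u

namespace DiagPaper

variable (𝒳 : Type u) [Category.{v} 𝒳]

/-- An object of the diagram category `Diag°(𝒳)`: a small category together with a
diagram of that shape in `𝒳`. -/
structure DiagObj : Type (max u (v + 1)) where
  shape : Cat.{v, v}
  diag : shape ⥤ 𝒳

variable {𝒳}

/-- A morphism `(F, φ) : (I, X) ⟶ (J, Y)` in `Diag°(𝒳)`. -/
structure DiagHom (A B : DiagObj 𝒳) : Type v where
  F : A.shape ⥤ B.shape
  φ : A.diag ⟶ F ⋙ B.diag

theorem DiagHom.ext' {A B : DiagObj 𝒳} {f g : DiagHom A B}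
    (hF : f.F = g.F) (hφ : HEq f.φ g.φ) : f = g := by
  cases f; cases g
  dsimp only at hF hφ
  subst hF
  rw [eq_of_heq hφ]

instance : Category (DiagObj 𝒳) where
  Hom := DiagHom
  id A := ⟨𝟭 A.shape, 𝟙 A.diag⟩
  comp f g := ⟨f.F ⋙ g.F, f.φ ≫ Functor.whiskerLeft f.F g.φ⟩
  id_comp f := DiagHom.ext' (Functor.id_comp _) (by
    apply heq_of_eq
    ext i
    simp)
  comp_id f := DiagHom.ext' (Functor.comp_id _) (by
    apply heq_of_eq
    ext i
    simp)
  assoc f g h := DiagHom.ext' (Functor.assoc _ _ _) (by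
    apply heq_of_eq
    ext i
    simp)

variable (𝒳)

/-- The forgetful functor `D^𝒳 : Diag°(𝒳) ⥤ Cat`. -/
def Dfunctor : DiagObj 𝒳 ⥤ Cat.{v, v} where
  obj A := A.shape
  map f := f.F.toCatHom

end DiagPaper

namespace DiagPaper

universe v₁ u₁

variable {B : Type u₁} [Category.{v₁} B]

/-- The category `𝒜` of functors `Σ : B ⥤ Diag°(X)` strictly over `Φ : B ⥤ Cat`
(i.e. with `Σ ⋙ D^X = Φ`), with morphisms the natural transformations whose image
under `D^X` is the identity of `Φ`. -/
structure OverPhi (Φ : B ⥤ Cat.{v, v}) (X : Type u) [Category.{v} X] where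
  toFun : B ⥤ DiagObj X
  over' : toFun ⋙ Dfunctor X = Φ

variable {Φ : B ⥤ Cat.{v, v}} {X : Type u} [Category.{v} X]

structure OverPhiHom (S T : OverPhi Φ X) where
  σ : S.toFun ⟶ T.toFun
  vert : Functor.whiskerRight σ (Dfunctor X) = eqToHom (S.over'.trans T.over'.symm)

theorem OverPhiHom.ext' {S T : OverPhi Φ X} {f g : OverPhiHom S T}
    (h : f.σ = g.σ) : f = g := by
  cases f; cases g
  dsimp only at h
  subst h
  rfl

instance : Category (OverPhi Φ X) where
  Hom := OverPhiHom
  id S := ⟨𝟙 S.toFun, by simp⟩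
  comp f g := ⟨f.σ ≫ g.σ, by rw [Functor.whiskerRight_comp, f.vert, g.vert, eqToHom_trans]⟩
  id_comp f := OverPhiHom.ext' (Category.id_comp _)
  comp_id f := OverPhiHom.ext' (Category.comp_id _)
  assoc f g h := OverPhiHom.ext' (Category.assoc _ _ _)

section Aux

@[simp] theorem DiagHom.comp_F {A C E : DiagObj X} (f : A ⟶ C) (g : C ⟶ E) :
    (f ≫ g).F = f.F ⋙ g.F := rfl

@[simp] theorem DiagHom.comp_φ_app {A C E : DiagObj X} (f : A ⟶ C) (g : C ⟶ E) (x : A.shape) :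
    (f ≫ g).φ.app x = f.φ.app x ≫ g.φ.app (f.F.obj x) := rfl

@[simp] theorem DiagHom.id_F (A : DiagObj X) : (𝟙 A : DiagHom A A).F = 𝟭 A.shape := rfl

@[simp] theorem DiagHom.id_φ_app (A : DiagObj X) (x : A.shape) :
    (𝟙 A : DiagHom A A).φ.app x = 𝟙 (A.diag.obj x) := rfl

theorem DiagHom.ext'' {A C : DiagObj X} {f g : DiagHom A C} (hF : f.F = g.F)
    (hφ : ∀ x, f.φ.app x = g.φ.app x ≫ eqToHom (by rw [hF])) : f = g := by
  cases f; cases g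
  dsimp only at hF
  subst hF
  congr 1
  ext x
  simpa using hφ x

theorem DiagHom.congr_app {A C : DiagObj X} {f g : A ⟶ C} (h : f = g) (x : A.shape) :
    f.φ.app x = g.φ.app x ≫ eqToHom (by rw [h]) := by
  subst h; simp

theorem DiagObj.eqToHom_F {A C : DiagObj X} (h : A = C) :
    (eqToHom h).F = (eqToHom (congrArg DiagObj.shape h)).toFunctor := by
  subst h; rfl

theorem DiagObj.eqToHom_φ_app {A C : DiagObj X} (h : A = C) (x : A.shape) :
    (eqToHom h).φ.app x = eqToHom (by subst h; rfl) := by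
  subst h; simp

@[simp] theorem OverPhi.id_σ (S : OverPhi Φ X) : (𝟙 S : OverPhiHom S S).σ = 𝟙 S.toFun := rfl

@[simp] theorem OverPhi.comp_σ {S S' S'' : OverPhi Φ X} (f : S ⟶ S') (g : S' ⟶ S'') :
    (f ≫ g).σ = f.σ ≫ g.σ := rfl

theorem OverPhi.ext'' {S T : OverPhi Φ X} (h : S.toFun = T.toFun) : S = T := by
  cases S; cases T; dsimp only at h; subst h; rfl

@[simp] theorem Groth_eqToHom_base {p q : Grothendieck Φ} (h : p = q) :
    (eqToHom h).base = eqToHom (congrArg Grothendieck.base h) := by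
  subst h; rfl

@[simp] theorem Groth_eqToHom_fiber {p q : Grothendieck Φ} (h : p = q) :
    (eqToHom h).fiber = eqToHom (by subst h; simp) := by
  subst h; simp

theorem Groth_dec {p q : Grothendieck Φ} (f : p ⟶ q) :
    f = (Grothendieck.ιNatTrans f.base).app p.fiber ≫ (Grothendieck.ι Φ q.base).map f.fiber := by
  fapply Grothendieck.ext
  · exact (Category.comp_id _).symm
  · show eqToHom _ ≫ f.fiber = eqToHom _ ≫
      (Φ.map (𝟙 q.base)).toFunctor.map (𝟙 ((Φ.map f.base).toFunctor.obj p.fiber)) ≫ (eqToHom _ ≫ f.fiber)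
    simp
    erw [eqToHom_trans_assoc]

/-- `T ↦ T̂`, on objects. -/
def hatObj (T : Grothendieck Φ ⥤ X) : OverPhi Φ X where
  toFun :=
    { obj := fun a => ⟨Φ.obj a, Grothendieck.ι Φ a ⋙ T⟩
      map := fun {a b} u => ⟨(Φ.map u).toFunctor, Functor.whiskerRight (Grothendieck.ιNatTrans u) T⟩
      map_id := fun a => DiagHom.ext'' (congrArg Cat.Hom.toFunctor (Φ.map_id a)) (fun x => by
        have h1 : (Grothendieck.ιNatTrans (𝟙 a)).app x
            = eqToHom (by rw [Φ.map_id]; rfl :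
                (Grothendieck.ι Φ a).obj x = ((Φ.map (𝟙 a)).toFunctor ⋙ Grothendieck.ι Φ a).obj x) := by
          rw [Grothendieck.eqToHom_eq]; rfl
        dsimp [Functor.whiskerRight]
        rw [h1, eqToHom_map]
        simp)
      map_comp := fun {a b c} u v => DiagHom.ext'' (congrArg Cat.Hom.toFunctor (Φ.map_comp u v)) (fun x => by
        have h1 : (Grothendieck.Hom.mk u (𝟙 ((Φ.map u).toFunctor.obj x)) :
                (⟨a, x⟩ : Grothendieck Φ) ⟶ ⟨b, (Φ.map u).toFunctor.obj x⟩) ≫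
              (Grothendieck.Hom.mk v (𝟙 ((Φ.map v).toFunctor.obj ((Φ.map u).toFunctor.obj x))) :
                (⟨b, (Φ.map u).toFunctor.obj x⟩ : Grothendieck Φ) ⟶
                  ⟨c, (Φ.map v).toFunctor.obj ((Φ.map u).toFunctor.obj x)⟩) ≫
              eqToHom (by rw [Φ.map_comp]; rfl :
                (⟨c, (Φ.map v).toFunctor.obj ((Φ.map u).toFunctor.obj x)⟩ : Grothendieck Φ)
                  = ⟨c, (Φ.map (u ≫ v)).toFunctor.obj x⟩)
            = (Grothendieck.Hom.mk (u ≫ v) (𝟙 ((Φ.map (u ≫ v)).toFunctor.obj x)) :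
                (⟨a, x⟩ : Grothendieck Φ) ⟶ ⟨c, (Φ.map (u ≫ v)).toFunctor.obj x⟩) := by
          fapply Grothendieck.ext
          · simp
          · simp only [Grothendieck.comp_fiber, Grothendieck.fiber_eqToHom, Grothendieck.comp_base,
              Grothendieck.base_eqToHom, CategoryTheory.Functor.map_id, Category.id_comp]
            erw [eqToHom_trans, eqToHom_trans]
            erw [eqToHom_trans]
            rfl
        dsimp [Functor.whiskerRight]
        have h2 := congrArg T.map h1
        rw [T.map_comp, T.map_comp, eqToHom_map] at h2
        rw [Category.assoc]
        exact h2.symm) }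
  over' := rfl

/-- `T ↦ T̂`, the functor `L`. -/
def L : (Grothendieck Φ ⥤ X) ⥤ OverPhi Φ X where
  obj := hatObj
  map {T T'} η :=
    { σ :=
        { app := fun a => ⟨𝟭 (Φ.obj a), Functor.whiskerLeft (Grothendieck.ι Φ a) η⟩
          naturality := fun {a b} u => DiagHom.ext'' rfl (fun x => by
            simp only [DiagHom.comp_φ_app, hatObj, Functor.whiskerRight_app, Functor.whiskerLeft_app,
              eqToHom_refl, Category.comp_id]
            exact (η.naturality _).trans (Category.comp_id _).symm) }
      vert := rfl }
  map_id T := OverPhiHom.ext' (by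
    apply NatTrans.ext; funext a
    exact DiagHom.ext'' rfl (fun x => by simp <;> rfl))
  map_comp f g := OverPhiHom.ext' (by
    apply NatTrans.ext; funext a
    exact DiagHom.ext'' rfl (fun x => by simp; exact (Category.comp_id _).symm))

/-- `Σ ↦ Σ̌` (over the strict composite). -/
def check (Sg : B ⥤ DiagObj X) : Grothendieck (Sg ⋙ Dfunctor X) ⥤ X :=
  Grothendieck.functorFrom (fun a => (Sg.obj a).diag) (fun {a b} u => (Sg.map u).φ)
    (fun a => by
      ext x
      rw [DiagHom.congr_app (Sg.map_id a)]
      simp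
      exact (CategoryTheory.eqToHom_app (F := (Sg.obj a).diag)
        (G := ((Sg ⋙ Dfunctor X).map (𝟙 a)).toFunctor ⋙ (Sg.obj a).diag) _ x).symm)
    (fun a b c u v => by
      ext x
      rw [DiagHom.congr_app (Sg.map_comp u v)]
      simp
      exact congrArg (fun k => _ ≫ _ ≫ k) (CategoryTheory.eqToHom_app
        (F := ((Sg ⋙ Dfunctor X).map u).toFunctor ⋙ ((Sg ⋙ Dfunctor X).map v).toFunctor ⋙ (Sg.obj c).diag)
        (G := ((Sg ⋙ Dfunctor X).map (u ≫ v)).toFunctor ⋙ (Sg.obj c).diag) _ x).symm)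

theorem hom_id_aux (Sg : B ⥤ DiagObj X) (a : B) {x y : (Sg.obj a).shape}
    (e : (Sg.map (𝟙 a)).F.obj x = x) (f : x ⟶ y) :
    (Sg.map (𝟙 a)).φ.app x ≫ (Sg.obj a).diag.map (eqToHom e ≫ f) = (Sg.obj a).diag.map f := by
  rw [DiagHom.congr_app (Sg.map_id a)]
  simp [eqToHom_map]

/-- `R` on objects. -/
def Robj (S : OverPhi Φ X) : Grothendieck Φ ⥤ X := S.over' ▸ check S.toFun

theorem check_diag (Sg : B ⥤ DiagObj X) (a : B) :
    Grothendieck.ι (Sg ⋙ Dfunctor X) a ⋙ check Sg = (Sg.obj a).diag := by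
  fapply CategoryTheory.Functor.ext
  · intro x; rfl
  · intro x y f
    show (check Sg).map ((Grothendieck.ι (Sg ⋙ Dfunctor X) a).map f) = _
    dsimp [check, Grothendieck.functorFrom]
    exact (hom_id_aux Sg a _ f).trans ((Category.comp_id _).symm.trans (Category.id_comp _).symm)

theorem phi_aux2 {s t : Cat.{v, v}} {Da Da' : s ⥤ X} {Db Db' : t ⥤ X} (ha : Da = Da') (hb : Db' = Db)
    (g : DiagObj.mk s Da' ⟶ DiagObj.mk t Db') (x : s) :
    (eqToHom (congrArg (DiagObj.mk s) ha) ≫ g ≫ eqToHom (congrArg (DiagObj.mk t) hb)).φ.app x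
      = eqToHom (by subst ha; rfl) ≫ g.φ.app x ≫ eqToHom (by subst ha hb; rfl) := by
  subst ha hb
  simp

theorem fin_aux {C : Type u} [Category.{v} C] {A B B' : C} (e1 : A = A) (φ : A ⟶ B) (m : B ⟶ B)
    (hm : m = 𝟙 B) (e2 : B = B') (e3 : B' = B) :
    φ ≫ m = (eqToHom e1 ≫ φ ≫ eqToHom e2) ≫ eqToHom e3 := by
  subst hm
  simp

theorem L_R_obj (S : OverPhi Φ X) : L.obj (Robj S) = S := by
  obtain ⟨Sg, h⟩ := S
  subst h
  apply OverPhi.ext''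
  show (hatObj (check Sg)).toFun = Sg
  fapply CategoryTheory.Functor.ext
  · intro a
    have hdiag : Grothendieck.ι (Sg ⋙ Dfunctor X) a ⋙ check Sg = (Sg.obj a).diag := by
      fapply CategoryTheory.Functor.ext
      · intro x; rfl
      · intro x y f
        show (check Sg).map ((Grothendieck.ι (Sg ⋙ Dfunctor X) a).map f) = _
        dsimp [check, Grothendieck.functorFrom]
        exact (hom_id_aux Sg a _ f).trans ((Category.comp_id _).symm.trans (Category.id_comp _).symm)
    exact congrArg (DiagObj.mk (Sg.obj a).shape) hdiag
  · intro a b u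
    refine DiagHom.ext'' ?_ ?_
    · show ((Sg ⋙ Dfunctor X).map u).toFunctor = _
      simp only [DiagHom.comp_F, DiagObj.eqToHom_F]
      erw [DiagObj.eqToHom_F]
      rfl
    · intro x
      show (check Sg).map ((Grothendieck.ιNatTrans u).app x) = _
      have P := phi_aux2 (check_diag Sg a) (check_diag Sg b).symm (Sg.map u) x
      refine Eq.trans ?_ (congrArg (· ≫ eqToHom _) P.symm)
      exact fin_aux _ ((Sg.map u).φ.app x) ((Sg.obj b).diag.map (𝟙 _)) ((Sg.obj b).diag.map_id _) _ _

theorem R_L_obj (T : Grothendieck Φ ⥤ X) : Robj (L.obj T) = T := by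
  show check (hatObj T).toFun = T
  fapply CategoryTheory.Functor.ext
  · intro p; rfl
  · intro p q f
    have hdec : f = (Grothendieck.ιNatTrans f.base).app p.fiber
        ≫ (Grothendieck.ι Φ q.base).map f.fiber :=
      Groth_dec f
    show (check (hatObj T).toFun).map f = _
    dsimp [check, Grothendieck.functorFrom, hatObj]
    exact ((T.map_comp _ _).symm.trans (congrArg T.map hdec.symm)).trans
      ((Category.comp_id _).symm.trans (Category.id_comp _).symm)

theorem Ffact {T T' : Grothendieck Φ ⥤ X} (τ : L.obj T ⟶ L.obj T') (a : B) :
    ((τ.σ.app a).F : Φ.obj a ⥤ Φ.obj a) = 𝟭 (Φ.obj a) := by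
  have h := congrArg (fun n => n.app a) τ.vert
  dsimp [Dfunctor] at h
  exact congrArg Cat.Hom.toFunctor h

theorem preim_nat (T T' : Grothendieck Φ ⥤ X) {p q : Grothendieck Φ} (f : p ⟶ q)
    (Fa : Φ.obj p.base ⥤ Φ.obj p.base) (Fb : Φ.obj q.base ⥤ Φ.obj q.base)
    (ha : Fa = 𝟭 _) (hb : Fb = 𝟭 _)
    (φa : Grothendieck.ι Φ p.base ⋙ T ⟶ Fa ⋙ Grothendieck.ι Φ p.base ⋙ T')
    (φb : Grothendieck.ι Φ q.base ⋙ T ⟶ Fb ⋙ Grothendieck.ι Φ q.base ⋙ T')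
    (hnat : T.map ((Grothendieck.ιNatTrans f.base).app p.fiber) ≫
        φb.app ((Φ.map f.base).toFunctor.obj p.fiber)
      = (φa.app p.fiber ≫ T'.map ((Grothendieck.ιNatTrans f.base).app (Fa.obj p.fiber))) ≫
        eqToHom (by subst ha hb; rfl :
          T'.obj ⟨q.base, (Φ.map f.base).toFunctor.obj (Fa.obj p.fiber)⟩
            = T'.obj ⟨q.base, Fb.obj ((Φ.map f.base).toFunctor.obj p.fiber)⟩)) :
    T.map f ≫ φb.app q.fiber ≫
        eqToHom (by subst hb; rfl : T'.obj ⟨q.base, Fb.obj q.fiber⟩ = T'.obj q)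
      = (φa.app p.fiber ≫
        eqToHom (by subst ha; rfl : T'.obj ⟨p.base, Fa.obj p.fiber⟩ = T'.obj p)) ≫ T'.map f := by
  subst ha hb
  have h1 := (congrArg T.map (Groth_dec f)).trans (T.map_comp _ _)
  have h1' := (congrArg T'.map (Groth_dec f)).trans (T'.map_comp _ _)
  have hfib : T.map ((Grothendieck.ι Φ q.base).map f.fiber) ≫ φb.app q.fiber
      = φb.app ((Φ.map f.base).toFunctor.obj p.fiber) ≫
        T'.map ((Grothendieck.ι Φ q.base).map f.fiber) :=
    φb.naturality f.fiber
  have hnat' : T.map ((Grothendieck.ιNatTrans f.base).app p.fiber) ≫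
        φb.app ((Φ.map f.base).toFunctor.obj p.fiber)
      = φa.app p.fiber ≫ T'.map ((Grothendieck.ιNatTrans f.base).app p.fiber) :=
    hnat.trans (Category.comp_id _)
  have H : T.map f ≫ φb.app q.fiber = φa.app p.fiber ≫ T'.map f :=
    (congrArg (· ≫ φb.app q.fiber) h1).trans <|
    (Category.assoc _ _ _).trans <|
    (congrArg (T.map ((Grothendieck.ιNatTrans f.base).app p.fiber) ≫ ·) hfib).trans <|
    (Category.assoc _ _ _).symm.trans <|
    (congrArg (· ≫ T'.map ((Grothendieck.ι Φ q.base).map f.fiber)) hnat').trans <|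
    (Category.assoc _ _ _).trans <|
    congrArg (φa.app p.fiber ≫ ·) h1'.symm
  exact (congrArg (T.map f ≫ ·) (Category.comp_id _)).trans
    (H.trans (congrArg (· ≫ T'.map f) (Category.comp_id _)).symm)

/-- The preimage under `L` of a morphism `τ : L T ⟶ L T'`. -/
def preim {T T' : Grothendieck Φ ⥤ X} (τ : L.obj T ⟶ L.obj T') : T ⟶ T' where
  app p := ((τ.σ.app p.base).φ).app p.fiber ≫
    eqToHom (by rw [Ffact τ p.base]; rfl :
      T'.obj ⟨p.base, ((τ.σ.app p.base).F).obj p.fiber⟩ = T'.obj p)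
  naturality {p q} f := by
    have hdec : f = (Grothendieck.ιNatTrans f.base).app p.fiber
        ≫ (Grothendieck.ι Φ q.base).map f.fiber :=
      Groth_dec f
    have hnat := DiagHom.congr_app (τ.σ.naturality f.base) p.fiber
    exact preim_nat T T' f _ _ (Ffact τ p.base) (Ffact τ q.base)
      (τ.σ.app p.base).φ (τ.σ.app q.base).φ hnat

theorem fin_aux2 {C : Type u} [Category.{v} C] {A B B' : C} (φ : A ⟶ B) (e : B = B') (e' : B' = B) :
    φ = (φ ≫ eqToHom e) ≫ eqToHom e' := by
  simp

theorem L_map_preim {T T' : Grothendieck Φ ⥤ X} (τ : L.obj T ⟶ L.obj T') :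
    L.map (preim τ) = τ := by
  apply OverPhiHom.ext'
  apply NatTrans.ext; funext a
  refine ((DiagHom.ext'' (Ffact τ a) (fun x => ?_)).symm :
    (L.map (preim τ)).σ.app a = τ.σ.app a)
  show ((τ.σ.app a).φ).app x = (preim τ).app ⟨a, x⟩ ≫ _
  dsimp [preim]
  exact fin_aux2 _ _ _

theorem L_faithful {T T' : Grothendieck Φ ⥤ X} {η η' : T ⟶ T'}
    (h : L.map η = L.map η') : η = η' := by
  ext p
  have hσ : (L.map η).σ.app p.base = (L.map η').σ.app p.base := by rw [h]
  have h3 := DiagHom.congr_app hσ p.fiber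
  dsimp only [L] at h3
  erw [eqToHom_refl, Category.comp_id] at h3
  exact h3

/-- The functor `R`. -/
def R : OverPhi Φ X ⥤ (Grothendieck Φ ⥤ X) where
  obj := Robj
  map {S S'} f := preim (eqToHom (L_R_obj S) ≫ f ≫ eqToHom (L_R_obj S').symm)
  map_id S := by
    apply L_faithful
    rw [L_map_preim]
    simp
  map_comp {S S' S''} f g := by
    apply L_faithful
    rw [L.map_comp, L_map_preim, L_map_preim, L_map_preim]
    simp

end Aux

/-- **Guitart adjunction, hom-isomorphism form (Peschke–Tholen, Theorem 2.9).**
The functor category `Grothendieck Φ ⥤ X` is isomorphic to the category of functors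
`B ⥤ Diag°(X)` lying strictly over `Φ`, via mutually inverse functors:
`T ↦ T̂` with `T̂ a = (Φ a, ι_a ⋙ T)` and `T̂ u = (Φ u, φᵘ)` where `φᵘ_x = T.map (u, 𝟙)`;
conversely `Σ ↦ Σ̌` with `Σ̌ (a, x) = (Σ a) x`. -/
theorem guitart_hom_isomorphism (B : Type u₁) [Category.{v₁} B]
    (Φ : B ⥤ Cat.{v, v}) (X : Type u) [Category.{v} X] :
    ∃ (L : (Grothendieck Φ ⥤ X) ⥤ OverPhi Φ X)
      (R : OverPhi Φ X ⥤ (Grothendieck Φ ⥤ X)),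
      L ⋙ R = 𝟭 _ ∧ R ⋙ L = 𝟭 _ ∧
      (∀ (T : Grothendieck Φ ⥤ X) (a : B),
        (L.obj T).toFun.obj a = DiagObj.mk (Φ.obj a) (Grothendieck.ι Φ a ⋙ T)) ∧
      (∀ (T : Grothendieck Φ ⥤ X) {a b : B} (u : a ⟶ b),
        HEq ((L.obj T).toFun.map u)
          (DiagHom.mk (A := DiagObj.mk (Φ.obj a) (Grothendieck.ι Φ a ⋙ T))
            (B := DiagObj.mk (Φ.obj b) (Grothendieck.ι Φ b ⋙ T))
            (Φ.map u).toFunctor (Functor.whiskerRight (Grothendieck.ιNatTrans u) T))) ∧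
      (∀ (S : OverPhi Φ X) (p : Grothendieck Φ),
        (R.obj S).obj p = ((S.toFun.obj p.base).diag).obj
          (cast (congrArg (fun C : Cat.{v, v} => (C : Type v))
            (Functor.congr_obj S.over' p.base).symm) p.fiber)) := by
  refine ⟨L, R, ?_, ?_, ?_, ?_, ?_⟩
  · fapply CategoryTheory.Functor.ext
    · intro T
      exact R_L_obj T
    · intro T T' η
      apply L_faithful
      show L.map (preim _) = _
      refine (L_map_preim _).trans ?_
      simp [eqToHom_map]
      exact congrArg (· ≫ _) (eqToHom_map L _).symm
  · fapply CategoryTheory.Functor.ext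
    · intro S
      exact L_R_obj S
    · intro S S' g
      show L.map (preim _) = _
      exact L_map_preim _
  · intro T a
    rfl
  · intro T a b u
    exact HEq.rfl
  · intro S p
    obtain ⟨Sg, h⟩ := S
    subst h
    rfl

end DiagPaper
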